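/- Define Ξ(ω) = (2ω − sin(2ω)) / (2·ω²·sin(ω)) for 0 < ω < π. Then Ξ(ω) ≥ 2/π for all ω in (0, π), with equality at ω = π/2 (i.e., the infimum of Ξ over (0, π) equals 2/π and is attained at π/2). -/

import Mathlib

/-!
One computes `Ξ'(ω) = −cos ω · T(ω) / (ω³ sin² ω)` with `T(ω) = ω² + (ω/2) sin 2ω − 2 sin² ω`.
Since `T(0) = T'(0) = 0` and `T''(ω) = 4 sin ω (sin ω − ω cos ω) > 0` on `(0, π)`, `T` is positive
there, so `Ξ'` has the sign of `−cos ω`: `Ξ` decreases up to `π/2` and increases afterwards.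
-/

open Real Set

theorem pos_of_hasDerivAt_pos {f f' : ℝ → ℝ} {a b : ℝ} (hf : ∀ x, HasDerivAt f (f' x) x)
    (ha : f a = 0) (hf' : ∀ x ∈ Ioo a b, 0 < f' x) {x : ℝ} (hx : x ∈ Ioc a b) : 0 < f x := by
  have hmono : StrictMonoOn f (Icc a b) :=
    strictMonoOn_of_hasDerivWithinAt_pos (convex_Icc a b)
      (fun y _ ↦ (hf y).continuousAt.continuousWithinAt)
      (fun y _ ↦ (hf y).hasDerivWithinAt) (by simpa only [interior_Icc] using hf')
  simpa only [ha] using hmono (left_mem_Icc.2 (hx.1.le.trans hx.2)) (Ioc_subset_Icc_self hx) hx.1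

theorem sin_sub_mul_cos_pos {x : ℝ} (hx₀ : 0 < x) (hxπ : x < π) : 0 < sin x - x * cos x := by
  refine pos_of_hasDerivAt_pos (f := fun x ↦ sin x - x * cos x) (f' := fun x ↦ x * sin x)
    (fun y ↦ ?_) (by simp) (fun y hy ↦ mul_pos hy.1 (sin_pos_of_pos_of_lt_pi hy.1 hy.2))
    ⟨hx₀, hxπ.le⟩
  refine ((hasDerivAt_sin y).fun_sub ((hasDerivAt_id' y).fun_mul (hasDerivAt_cos y))).congr_deriv ?_
  ring

noncomputable def xiT (ω : ℝ) : ℝ := ω ^ 2 + ω / 2 * sin (2 * ω) - 2 * sin ω ^ 2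

theorem hasDerivAt_xiT (x : ℝ) :
    HasDerivAt xiT (2 * x - 3 / 2 * sin (2 * x) + x * cos (2 * x)) x := by
  have h2 : HasDerivAt (2 * ·) 2 x := hasDerivAt_const_mul 2
  refine (((hasDerivAt_pow 2 x).add (((hasDerivAt_id' x).div_const 2).mul h2.sin)).sub
    (((hasDerivAt_sin x).pow 2).const_mul 2)).congr_deriv ?_
  simp only [sin_two_mul, cos_two_mul]
  push_cast
  ring

theorem hasDerivAt_deriv_xiT (x : ℝ) :
    HasDerivAt (fun x ↦ 2 * x - 3 / 2 * sin (2 * x) + x * cos (2 * x))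
      (4 * sin x * (sin x - x * cos x)) x := by
  have h2 : HasDerivAt (2 * ·) 2 x := hasDerivAt_const_mul 2
  refine ((h2.sub (h2.sin.const_mul (3 / 2))).add ((hasDerivAt_id' x).mul h2.cos)).congr_deriv ?_
  simp only [sin_two_mul, cos_two_mul]
  nlinarith [sin_sq_add_cos_sq x]

theorem xiT_pos {x : ℝ} (hx₀ : 0 < x) (hxπ : x < π) : 0 < xiT x := by
  have hT' : ∀ y ∈ Ioo 0 π, 0 < 2 * y - 3 / 2 * sin (2 * y) + y * cos (2 * y) := fun y hy ↦
    pos_of_hasDerivAt_pos hasDerivAt_deriv_xiT (by simp)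
      (fun z hz ↦ mul_pos (mul_pos four_pos (sin_pos_of_pos_of_lt_pi hz.1 hz.2))
        (sin_sub_mul_cos_pos hz.1 hz.2)) (Ioo_subset_Ioc_self hy)
  exact pos_of_hasDerivAt_pos hasDerivAt_xiT (by simp [xiT]) hT' ⟨hx₀, hxπ.le⟩

noncomputable def xi (ω : ℝ) : ℝ := (2 * ω - sin (2 * ω)) / (2 * ω ^ 2 * sin ω)

theorem hasDerivAt_xi {x : ℝ} (hx₀ : 0 < x) (hxπ : x < π) :
    HasDerivAt xi (-cos x * (xiT x / (x ^ 3 * sin x ^ 2))) x := by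
  have hsin := sin_pos_of_pos_of_lt_pi hx₀ hxπ
  have h2 : HasDerivAt (2 * ·) 2 x := hasDerivAt_const_mul 2
  refine ((h2.fun_sub h2.sin).fun_div
    (((hasDerivAt_pow 2 x).const_mul 2).fun_mul (hasDerivAt_sin x)) (by positivity)).congr_deriv ?_
  rw [xiT, sin_two_mul, cos_two_mul]
  field_simp
  ring

theorem isMinOn_xi : IsMinOn xi (Ioo 0 π) (π / 2) := by
  have hπ := pi_pos
  have hdiff : DifferentiableOn ℝ xi (Ioo 0 π) :=
    fun x hx ↦ (hasDerivAt_xi hx.1 hx.2).differentiableAt.differentiableWithinAt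
  have hderiv {x : ℝ} (hx₀ : 0 < x) (hxπ : x < π) : ∃ c > 0, deriv xi x = -cos x * c := by
    have := sin_pos_of_pos_of_lt_pi hx₀ hxπ
    exact ⟨_, div_pos (xiT_pos hx₀ hxπ) (by positivity), (hasDerivAt_xi hx₀ hxπ).deriv⟩
  refine isMinOn_Ioo_of_deriv (hasDerivAt_xi (by positivity) (by linarith)).continuousAt
    (hdiff.mono (Ioo_subset_Ioo_right (by linarith)))
    (hdiff.mono (Ioo_subset_Ioo_left (by linarith))) (fun x hx ↦ ?_) (fun x hx ↦ ?_)
  · obtain ⟨c, hc, h⟩ := hderiv hx.1 (by linarith [hx.2])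
    nlinarith [cos_pos_of_mem_Ioo ⟨by linarith [hx.1], hx.2⟩]
  · obtain ⟨c, hc, h⟩ := hderiv (by linarith [hx.1]) hx.2
    nlinarith [cos_neg_of_pi_div_two_lt_of_lt hx.1 (by linarith [hx.2])]

theorem xi_pi_div_two : xi (π / 2) = 2 / π := by
  rw [xi, mul_div_cancel₀ π two_ne_zero, sin_pi, sin_pi_div_two]
  field_simp
  ring

theorem Xi_ge (Ξ : ℝ → ℝ)
    (hΞ : ∀ ω, Ξ ω = (2 * ω - Real.sin (2 * ω)) / (2 * ω ^ 2 * Real.sin ω)) :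
    (∀ ω, 0 < ω → ω < π → Ξ ω ≥ 2 / π) ∧ Ξ (π / 2) = 2 / π := by
  obtain rfl : Ξ = xi := funext hΞ
  refine ⟨fun ω hω₀ hωπ ↦ ?_, xi_pi_div_two⟩
  rw [← xi_pi_div_two]
  exact isMinOn_xi ⟨hω₀, hωπ⟩
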